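/- arXiv:2010.15676 — 6 statements merged into one kernel-verified Lean document; each statement's English description precedes it below -/
import Mathlib

section
/- Let M be a real symmetric positive definite n×n matrix and v ∈ ℝⁿ a nonzero vector, and set p = M v and R_p = M⁻¹ − (v vᵀ)/(vᵀ M v). Then a vector w ∈ ℝⁿ satisfies R_p w = 0 if and only if w is a scalar multiple of p; that is, the kernel of R_p is exactly the span of p = M v. -/
open Matrix

noncomputable section

/-- `R_p = M⁻¹ − (v vᵀ)/(vᵀ M v)`. -/
def Rp {n : ℕ} (M : Matrix (Fin n) (Fin n) ℝ) (v : Fin n → ℝ) : Matrix (Fin n) (Fin n) ℝ :=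
  M⁻¹ - (v ⬝ᵥ M.mulVec v)⁻¹ • vecMulVec v v

namespace Matrix

variable {K ι : Type*} [Field K] [Fintype ι] [DecidableEq ι]

theorem inv_sub_smul_vecMulVec_mulVec (M : Matrix ι ι K) (v w : ι → K) :
    (M⁻¹ - (v ⬝ᵥ M *ᵥ v)⁻¹ • vecMulVec v v) *ᵥ w
      = M⁻¹ *ᵥ w - ((v ⬝ᵥ w) / (v ⬝ᵥ M *ᵥ v)) • v := by
  rw [sub_mulVec, smul_mulVec, vecMulVec_mulVec, op_smul_eq_smul, smul_smul, div_eq_inv_mul]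

theorem inv_sub_smul_vecMulVec_mulVec_eq_zero_iff {M : Matrix ι ι K} (hM : IsUnit M)
    {v : ι → K} (hq : v ⬝ᵥ M *ᵥ v ≠ 0) (w : ι → K) :
    (M⁻¹ - (v ⬝ᵥ M *ᵥ v)⁻¹ • vecMulVec v v) *ᵥ w = 0 ↔ ∃ c : K, w = c • M *ᵥ v := by
  have hdet : IsUnit M.det := (isUnit_iff_isUnit_det M).mp hM
  rw [inv_sub_smul_vecMulVec_mulVec, sub_eq_zero]
  constructor
  · intro h
    refine ⟨(v ⬝ᵥ w) / (v ⬝ᵥ M *ᵥ v), ?_⟩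
    rw [← mulVec_smul, ← h, mulVec_mulVec, mul_nonsing_inv M hdet, one_mulVec]
  · rintro ⟨c, rfl⟩
    rw [mulVec_smul, mulVec_mulVec, nonsing_inv_mul M hdet, one_mulVec, dotProduct_smul,
      smul_eq_mul, mul_div_cancel_right₀ c hq]

end Matrix

/-- for `M` symmetric positive definite and `v ≠ 0`, the kernel of
`R_p = M⁻¹ − (v vᵀ)/(vᵀ M v)` is exactly the span of `p = M v`. -/
theorem kernel_Rp_eq_span_p {n : ℕ} (M : Matrix (Fin n) (Fin n) ℝ) (hM : M.PosDef)
    (v : Fin n → ℝ) (hv : v ≠ 0) :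
    ∀ w : Fin n → ℝ, (Rp M v).mulVec w = 0 ↔ ∃ c : ℝ, w = c • M.mulVec v := by
  have hq : 0 < v ⬝ᵥ M *ᵥ v := by simpa using hM.dotProduct_mulVec_pos hv
  exact inv_sub_smul_vecMulVec_mulVec_eq_zero_iff hM.isUnit hq.ne'

end
end

section
/- Let M be a real symmetric positive definite n×n matrix and v ∈ ℝⁿ a nonzero vector, and set p = M v, R_p = M⁻¹ − (v vᵀ)/(vᵀ M v), and R_v = M − (p pᵀ)/(pᵀ M⁻¹ p). Then R_v = M R_p M, and a vector w ∈ ℝⁿ satisfies R_v w = 0 if and only if w is a scalar multiple of v; that is, the kernel of R_v is exactly the span of v. -/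
open Matrix

noncomputable section

/-- `R_v = M − (p pᵀ)/(pᵀ M⁻¹ p)` where `p = M v`. -/
def Rv {n : ℕ} (M : Matrix (Fin n) (Fin n) ℝ) (v : Fin n → ℝ) : Matrix (Fin n) (Fin n) ℝ :=
  M - ((M.mulVec v) ⬝ᵥ M⁻¹.mulVec (M.mulVec v))⁻¹ • vecMulVec (M.mulVec v) (M.mulVec v)

section

variable {n : ℕ} {M : Matrix (Fin n) (Fin n) ℝ}

theorem Rv_eq_of_isUnit_det (hM : IsUnit M.det) (v : Fin n → ℝ) :
    Rv M v = M - (v ⬝ᵥ M *ᵥ v)⁻¹ • vecMulVec (M *ᵥ v) (M *ᵥ v) := by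
  rw [Rv, mulVec_mulVec, nonsing_inv_mul M hM, one_mulVec, dotProduct_comm]

theorem Rv_eq_mul_Rp_mul (hM : IsUnit M.det) (hMs : M.IsSymm) (v : Fin n → ℝ) :
    Rv M v = M * Rp M v * M := by
  have hvM : v ᵥ* M = M *ᵥ v := by
    conv_lhs => rw [← hMs.eq]
    exact vecMul_transpose M v
  rw [Rv_eq_of_isUnit_det hM, Rp, Matrix.mul_sub, Matrix.sub_mul, mul_nonsing_inv M hM,
    Matrix.one_mul, Matrix.mul_smul, Matrix.smul_mul, mul_vecMulVec, vecMulVec_mul, hvM]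

-- The multiple of `v` subtracted from `w` is its `M`-orthogonal projection onto `v`.
theorem Rv_mulVec (hM : IsUnit M.det) (v w : Fin n → ℝ) :
    Rv M v *ᵥ w = M *ᵥ (w - ((v ⬝ᵥ M *ᵥ v)⁻¹ * (M *ᵥ v ⬝ᵥ w)) • v) := by
  rw [Rv_eq_of_isUnit_det hM, sub_mulVec, smul_mulVec, vecMulVec_mulVec, op_smul_eq_smul,
    smul_smul, mulVec_sub, mulVec_smul]

theorem Rv_mulVec_eq_zero_iff (hM : IsUnit M.det) {v : Fin n → ℝ} (hv : v ⬝ᵥ M *ᵥ v ≠ 0)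
    (w : Fin n → ℝ) : Rv M v *ᵥ w = 0 ↔ ∃ c : ℝ, w = c • v := by
  have hM_inj : Function.Injective M.mulVec := mulVec_injective_iff_isUnit.mpr
    ((isUnit_iff_isUnit_det M).mpr hM)
  rw [Rv_mulVec hM, ← mulVec_zero M, hM_inj.eq_iff, sub_eq_zero]
  refine ⟨fun hw => ⟨_, hw⟩, ?_⟩
  rintro ⟨c, rfl⟩
  rw [dotProduct_smul, dotProduct_comm (M *ᵥ v), smul_eq_mul, mul_comm c,
    inv_mul_cancel_left₀ hv]

end

/-- for `M` symmetric positive definite and `v ≠ 0`, with `p = M v`,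
`R_v = M R_p M`, and the kernel of `R_v` is exactly the span of `v`. -/
theorem Rv_eq_MRpM_and_kernel_eq_span_v {n : ℕ} (M : Matrix (Fin n) (Fin n) ℝ)
    (hM : M.PosDef) (v : Fin n → ℝ) (hv : v ≠ 0) :
    Rv M v = M * Rp M v * M ∧
    ∀ w : Fin n → ℝ, (Rv M v).mulVec w = 0 ↔ ∃ c : ℝ, w = c • v := by
  have hdet : IsUnit M.det := isUnit_iff_ne_zero.mpr hM.det_pos.ne'
  have hMs : M.IsSymm := isHermitian_iff_isSymm.mp hM.isHermitian
  exact ⟨Rv_eq_mul_Rp_mul hdet hMs v,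
    Rv_mulVec_eq_zero_iff hdet (hM.dotProduct_mulVec_pos hv).ne'⟩

end
end

section
/- Let M be a real symmetric positive definite n×n matrix, v ∈ ℝⁿ a nonzero vector, and h, f ∈ ℝⁿ arbitrary vectors. Define the energization coefficient α = −(vᵀ M v)⁻¹ vᵀ (M h − f). Then ⟨v, M(−h − α v) + f⟩ = 0; that is, substituting the energized acceleration ẍ = −h − α v into the energy-derivative expression ⟨v, M ẍ + f⟩ yields zero. -/
open Matrix

noncomputable section

/-- The energization coefficient `α = −(vᵀ M v)⁻¹ vᵀ (M h − f)`. -/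
def energizationCoef {n : ℕ} (M : Matrix (Fin n) (Fin n) ℝ) (v h f : Fin n → ℝ) : ℝ :=
  -(v ⬝ᵥ M.mulVec v)⁻¹ * (v ⬝ᵥ (M.mulVec h - f))

/- The energy derivative `⟨v, M(−h − a v) + f⟩` is affine in `a` with slope `−vᵀ M v`;
the energization coefficient is its root, which exists once `vᵀ M v ≠ 0`. -/

theorem dotProduct_mulVec_neg_sub_smul_add {R ι : Type*} [CommRing R] [Fintype ι]
    (M : Matrix ι ι R) (v h f : ι → R) (a : R) :
    v ⬝ᵥ (M *ᵥ (-h - a • v) + f) = -(v ⬝ᵥ (M *ᵥ h - f)) - a * (v ⬝ᵥ M *ᵥ v) := by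
  simp only [mulVec_sub, mulVec_neg, mulVec_smul, dotProduct_add, dotProduct_sub,
    dotProduct_neg, dotProduct_smul, smul_eq_mul]
  ring

theorem Matrix.PosDef.dotProduct_mulVec_ne_zero {n : Type*} [Fintype n]
    {M : Matrix n n ℝ} (hM : M.PosDef) {v : n → ℝ} (hv : v ≠ 0) :
    v ⬝ᵥ M *ᵥ v ≠ 0 :=
  (hM.dotProduct_mulVec_pos hv).ne'

/-- for `M` symmetric positive definite, `v ≠ 0`, and arbitrary `h, f`,
substituting the energized acceleration `ẍ = −h − α v` into the energy-derivative
expression `⟨v, M ẍ + f⟩` yields zero. -/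
theorem energization_coefficient_conserves_energy {n : ℕ}
    (M : Matrix (Fin n) (Fin n) ℝ) (hM : M.PosDef) (v : Fin n → ℝ) (hv : v ≠ 0)
    (h f : Fin n → ℝ) :
    v ⬝ᵥ (M.mulVec (-h - energizationCoef M v h f • v) + f) = 0 := by
  have hvMv : v ⬝ᵥ M *ᵥ v ≠ 0 := hM.dotProduct_mulVec_ne_zero hv
  rw [dotProduct_mulVec_neg_sub_smul_add, energizationCoef]
  field_simp
  ring

end
end

section
/- Let M be a real symmetric positive definite n×n matrix, v ∈ ℝⁿ a nonzero vector, and h, f ∈ ℝⁿ arbitrary vectors. With α = −(vᵀ M v)⁻¹ vᵀ (M h − f), R_p = M⁻¹ − (v vᵀ)/(vᵀ M v), and P = M R_p, we have P (M h − f) = (M h − f) + α M v; equivalently, the energized equation ẍ = −h − α v is equivalent to M ẍ + f + P(M h − f) = 0. -/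
open Matrix

noncomputable section

lemma vecMulVec_mulVec' {n : ℕ} (a b c : Fin n → ℝ) :
    (vecMulVec a b).mulVec c = (b ⬝ᵥ c) • a := by
  funext i
  simp only [vecMulVec_apply, mulVec, dotProduct, Finset.sum_mul, Pi.smul_apply, smul_eq_mul]
  exact Finset.sum_congr rfl fun x _ => by ring

/-- for `M` symmetric positive definite, `v ≠ 0`, and arbitrary `h, f`,
with `α` the energization coefficient and `P = M R_p`, we have
`P (M h − f) = (M h − f) + α M v`; equivalently, the energized equation `ẍ = −h − α v`
is equivalent to `M ẍ + f + P (M h − f) = 0`. -/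
theorem energized_system_projection_form {n : ℕ}
    (M : Matrix (Fin n) (Fin n) ℝ) (hM : M.PosDef) (v : Fin n → ℝ) (hv : v ≠ 0)
    (h f : Fin n → ℝ) :
    (M * Rp M v).mulVec (M.mulVec h - f)
      = (M.mulVec h - f) + energizationCoef M v h f • M.mulVec v ∧
    ∀ a : Fin n → ℝ,
      (M.mulVec a + f + (M * Rp M v).mulVec (M.mulVec h - f) = 0 ↔
        a = -h - energizationCoef M v h f • v) := by
  have hdet : IsUnit M.det := isUnit_iff_ne_zero.mpr hM.det_pos.ne'
  set w := M.mulVec h - f with hw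
  set α := energizationCoef M v h f with hα
  have key : (M * Rp M v).mulVec w = w + α • M.mulVec v := by
    rw [← mulVec_mulVec]
    rw [Rp, sub_mulVec, smul_mulVec, vecMulVec_mulVec', mulVec_sub, mulVec_smul,
      mulVec_mulVec, M.mul_nonsing_inv hdet, one_mulVec, mulVec_smul]
    rw [hα, energizationCoef, ← hw]
    module
  refine ⟨key, fun a => ?_⟩
  rw [key]
  constructor
  · intro H
    have h0 : M.mulVec (a - (-h - α • v)) = 0 := by
      rw [mulVec_sub, mulVec_sub, mulVec_neg, mulVec_smul]
      have : M.mulVec a + f + (w + α • M.mulVec v) = 0 := H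
      rw [hw] at this
      linear_combination (norm := module) this
    have := congrArg (M⁻¹.mulVec) h0
    rw [mulVec_mulVec, M.nonsing_inv_mul hdet, one_mulVec, mulVec_zero] at this
    linear_combination (norm := module) this
  · intro H
    subst H
    rw [hw]
    rw [mulVec_sub, mulVec_neg, mulVec_smul]
    module

end
end

section
/- Let L : ℝⁿ × ℝⁿ → ℝ be twice continuously differentiable with M(x,v) = ∂²_{vv}L(x,v) and f(x,v) = ∂_x(∂_v L)(x,v) · v − ∂_x L(x,v), let h : ℝⁿ × ℝⁿ → ℝⁿ be continuous, and suppose M(x,v) is positive definite whenever v ≠ 0. If x : ℝ → ℝⁿ is a twice continuously differentiable curve with ẋ(t) ≠ 0 for all t satisfying the energized equation ẍ(t) + h(x(t), ẋ(t)) + α(x(t), ẋ(t)) ẋ(t) = 0, where α(x,v) = −(vᵀ M(x,v) v)⁻¹ vᵀ (M(x,v) h(x,v) − f(x,v)), then the energy H(t) = ⟨∂_v L(x(t), ẋ(t)), ẋ(t)⟩ − L(x(t), ẋ(t)) is constant in t. -/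
/-
Along any curve `s ↦ (x s, u s)` with `x' = u` and `u' = a`, the terms `⟨∂_v L, a⟩` coming
from `⟨∂_v L, u⟩` and from `L` cancel, so `dH/dt = ⟨M a + f, u⟩`. On an energized trajectory
`a = -h - α u`, and `α` is exactly the multiplier that makes this power vanish; dividing by
`⟨u, M u⟩` is legitimate because `M` is positive definite and `u ≠ 0`.
-/

open RealInnerProductSpace

noncomputable section

/-- The gradient of `L` in its velocity argument: `∂_v L(x, v)`. -/
def gradV {n : ℕ} (L : EuclideanSpace ℝ (Fin n) × EuclideanSpace ℝ (Fin n) → ℝ)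
    (x v : EuclideanSpace ℝ (Fin n)) : EuclideanSpace ℝ (Fin n) :=
  gradient (fun w => L (x, w)) v

/-- The gradient of `L` in its position argument: `∂_x L(x, v)`. -/
def gradX {n : ℕ} (L : EuclideanSpace ℝ (Fin n) × EuclideanSpace ℝ (Fin n) → ℝ)
    (x v : EuclideanSpace ℝ (Fin n)) : EuclideanSpace ℝ (Fin n) :=
  gradient (fun y => L (y, v)) x

/-- The metric `M(x,v) = ∂²_{vv} L(x,v)`, as a (continuous linear) operator. -/
def Mop {n : ℕ} (L : EuclideanSpace ℝ (Fin n) × EuclideanSpace ℝ (Fin n) → ℝ)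
    (x v : EuclideanSpace ℝ (Fin n)) :
    EuclideanSpace ℝ (Fin n) →L[ℝ] EuclideanSpace ℝ (Fin n) :=
  fderiv ℝ (fun u => gradV L x u) v

/-- The Euler–Lagrange force term `f(x,v) = ∂_x(∂_v L)(x,v) · v − ∂_x L(x,v)`. -/
def fEL {n : ℕ} (L : EuclideanSpace ℝ (Fin n) × EuclideanSpace ℝ (Fin n) → ℝ)
    (x v : EuclideanSpace ℝ (Fin n)) : EuclideanSpace ℝ (Fin n) :=
  (fderiv ℝ (fun y => gradV L y v) x) v - gradX L x v

/-- The Hamiltonian (energy) `H(x,v) = ⟨∂_v L(x,v), v⟩ − L(x,v)`. -/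
def Ham {n : ℕ} (L : EuclideanSpace ℝ (Fin n) × EuclideanSpace ℝ (Fin n) → ℝ)
    (x v : EuclideanSpace ℝ (Fin n)) : ℝ :=
  ⟪gradV L x v, v⟫ - L (x, v)

/-- The energization coefficient
`α(x,v) = −(vᵀ M(x,v) v)⁻¹ vᵀ (M(x,v) h(x,v) − f(x,v))`. -/
def alphaCoef {n : ℕ} (L : EuclideanSpace ℝ (Fin n) × EuclideanSpace ℝ (Fin n) → ℝ)
    (h : EuclideanSpace ℝ (Fin n) × EuclideanSpace ℝ (Fin n) → EuclideanSpace ℝ (Fin n))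
    (x v : EuclideanSpace ℝ (Fin n)) : ℝ :=
  -(⟪v, Mop L x v v⟫)⁻¹ * ⟪v, Mop L x v (h (x, v)) - fEL L x v⟫

theorem DifferentiableAt.hasDerivAt_comp_prodMk {𝕜 E F G : Type*} [NontriviallyNormedField 𝕜]
    [NormedAddCommGroup E] [NormedSpace 𝕜 E] [NormedAddCommGroup F] [NormedSpace 𝕜 F]
    [NormedAddCommGroup G] [NormedSpace 𝕜 G] {Φ : E × F → G} {a : 𝕜 → E} {b : 𝕜 → F}
    {a' : E} {b' : F} {t : 𝕜} (hΦ : DifferentiableAt 𝕜 Φ (a t, b t))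
    (ha : HasDerivAt a a' t) (hb : HasDerivAt b b' t) :
    HasDerivAt (fun s => Φ (a s, b s))
      (fderiv 𝕜 (fun y => Φ (y, b t)) (a t) a' + fderiv 𝕜 (fun w => Φ (a t, w)) (b t) b') t := by
  have hfst :
      HasFDerivAt (fun y => Φ (y, b t)) ((fderiv 𝕜 Φ (a t, b t)).comp (.inl 𝕜 E F)) (a t) :=
    hΦ.hasFDerivAt.comp (a t) (hasFDerivAt_prodMk_left (a t) (b t))
  have hsnd :
      HasFDerivAt (fun w => Φ (a t, w)) ((fderiv 𝕜 Φ (a t, b t)).comp (.inr 𝕜 E F)) (b t) :=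
    hΦ.hasFDerivAt.comp (b t) (hasFDerivAt_prodMk_right (a t) (b t))
  rw [hfst.fderiv, hsnd.fderiv, ContinuousLinearMap.comp_inl_add_comp_inr _ (a', b')]
  exact hΦ.hasFDerivAt.comp_hasDerivAt t (ha.prodMk hb)

section Energy

variable {n : ℕ} {L : EuclideanSpace ℝ (Fin n) × EuclideanSpace ℝ (Fin n) → ℝ}

theorem contDiff_gradV (hL : ContDiff ℝ 2 L) :
    ContDiff ℝ 1 (fun p : EuclideanSpace ℝ (Fin n) × EuclideanSpace ℝ (Fin n) =>
      gradV L p.1 p.2) := by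
  have hpartial : ContDiff ℝ 1 (fun p : EuclideanSpace ℝ (Fin n) × EuclideanSpace ℝ (Fin n) =>
      fderiv ℝ (fun w => L (p.1, w)) p.2) :=
    ContDiff.fderiv (hL.comp (by fun_prop)) contDiff_snd (by norm_num)
  exact (InnerProductSpace.toDual ℝ _).symm.contDiff.comp hpartial

theorem hasDerivAt_ham_comp (hL : ContDiff ℝ 2 L) {x u : ℝ → EuclideanSpace ℝ (Fin n)}
    {a : EuclideanSpace ℝ (Fin n)} {t : ℝ} (hx : HasDerivAt x (u t) t) (hu : HasDerivAt u a t) :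
    HasDerivAt (fun s => Ham L (x s) (u s))
      ⟪Mop L (x t) (u t) a + fEL L (x t) (u t), u t⟫ t := by
  have hG :=
    ((contDiff_gradV hL).differentiable one_ne_zero (x t, u t)).hasDerivAt_comp_prodMk hx hu
  have hL' := (hL.differentiable two_ne_zero (x t, u t)).hasDerivAt_comp_prodMk hx hu
  refine ((hG.inner ℝ hu).sub hL').congr_deriv ?_
  simp only [Mop, fEL, gradX, gradV, ← inner_gradient_left, inner_add_left, inner_sub_left]
  ring

theorem inner_Mop_add_fEL_eq_zero
    {h : EuclideanSpace ℝ (Fin n) × EuclideanSpace ℝ (Fin n) → EuclideanSpace ℝ (Fin n)}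
    {x v a : EuclideanSpace ℝ (Fin n)} (hMv : ⟪v, Mop L x v v⟫ ≠ 0)
    (ha : a + h (x, v) + alphaCoef L h x v • v = 0) :
    ⟪Mop L x v a + fEL L x v, v⟫ = 0 := by
  rw [eq_neg_of_add_eq_zero_left (a := a) (by rwa [← add_assoc])]
  simp only [map_neg, map_add, map_smul, inner_add_left, inner_neg_left, real_inner_smul_left]
  rw [alphaCoef, inner_sub_right, real_inner_comm v, real_inner_comm v, real_inner_comm v]
  field_simp
  ring

end Energy

theorem energized_system_conserves_energy_general {n : ℕ}
    (L : EuclideanSpace ℝ (Fin n) × EuclideanSpace ℝ (Fin n) → ℝ)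
    (hL : ContDiff ℝ 2 L)
    (h : EuclideanSpace ℝ (Fin n) × EuclideanSpace ℝ (Fin n) → EuclideanSpace ℝ (Fin n))
    (hMpd : ∀ (x v : EuclideanSpace ℝ (Fin n)), v ≠ 0 →
      ∀ w : EuclideanSpace ℝ (Fin n), w ≠ 0 → 0 < ⟪w, Mop L x v w⟫)
    (x : ℝ → EuclideanSpace ℝ (Fin n)) (hx : ContDiff ℝ 2 x)
    (hv : ∀ t : ℝ, deriv x t ≠ 0)
    (heq : ∀ t : ℝ,
      deriv (deriv x) t + h (x t, deriv x t)
        + alphaCoef L h (x t) (deriv x t) • deriv x t = 0) :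
    ∀ t s : ℝ, Ham L (x t) (deriv x t) = Ham L (x s) (deriv x s) := by
  have hH : ∀ t, HasDerivAt (fun s => Ham L (x s) (deriv x s)) 0 t := fun t => by
    have := hasDerivAt_ham_comp hL (hx.differentiable two_ne_zero t).hasDerivAt
      (hx.differentiable_deriv_two t).hasDerivAt
    rwa [inner_Mop_add_fEL_eq_zero (hMpd _ _ (hv t) _ (hv t)).ne' (heq t)] at this
  exact is_const_of_deriv_eq_zero (fun t => (hH t).differentiableAt) (fun t => (hH t).deriv)

/-- system energization: if `x` satisfies the energized equation
`ẍ + h(x,ẋ) + α(x,ẋ) ẋ = 0` with the energization coefficient `α`, then the energy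
`H(t) = ⟨∂_v L(x,ẋ), ẋ⟩ − L(x,ẋ)` is constant in `t`. -/
theorem energized_system_conserves_energy {n : ℕ}
    (L : EuclideanSpace ℝ (Fin n) × EuclideanSpace ℝ (Fin n) → ℝ)
    (hL : ContDiff ℝ 2 L)
    (h : EuclideanSpace ℝ (Fin n) × EuclideanSpace ℝ (Fin n) → EuclideanSpace ℝ (Fin n))
    (hh : Continuous h)
    (hMpd : ∀ (x v : EuclideanSpace ℝ (Fin n)), v ≠ 0 →
      ∀ w : EuclideanSpace ℝ (Fin n), w ≠ 0 → 0 < ⟪w, Mop L x v w⟫)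
    (x : ℝ → EuclideanSpace ℝ (Fin n)) (hx : ContDiff ℝ 2 x)
    (hv : ∀ t : ℝ, deriv x t ≠ 0)
    (heq : ∀ t : ℝ,
      deriv (deriv x) t + h (x t, deriv x t)
        + alphaCoef L h (x t) (deriv x t) • deriv x t = 0) :
    ∀ t s : ℝ, Ham L (x t) (deriv x t) = Ham L (x s) (deriv x s) :=
  energized_system_conserves_energy_general L hL h hMpd x hx hv heq

end
end

section
/- Let M : ℝⁿ × (ℝⁿ \ {0}) → ℝ^{n×n} assign symmetric positive definite matrices with M(x, α v) = M(x, v) for all α > 0 (degree-0 homogeneity in velocity), and let f, h₂ : ℝⁿ × (ℝⁿ \ {0}) → ℝⁿ be positively homogeneous of degree 2 in velocity (f(x, α v) = α² f(x,v) and h₂(x, α v) = α² h₂(x,v) for α > 0). Define the bent geometry term h̃₂(x,v) = M(x,v)⁻¹ f(x,v) + R_p(x,v) (M(x,v) h₂(x,v) − f(x,v)), where R_p(x,v) = M(x,v)⁻¹ − (v vᵀ)/(vᵀ M(x,v) v). Then h̃₂ is positively homogeneous of degree 2 in velocity: h̃₂(x, α v) = α² h̃₂(x, v) for all α > 0 and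 v ≠ 0. -/
open Matrix

noncomputable section

/-- The bent geometry term `h̃₂ = M⁻¹ f + R_p (M h₂ − f)` of the energized system. -/
def bentGeom {n : ℕ} (M : Matrix (Fin n) (Fin n) ℝ) (v f h₂ : Fin n → ℝ) : Fin n → ℝ :=
  M⁻¹.mulVec f + (Rp M v).mulVec (M.mulVec h₂ - f)

lemma Rp_smul {n : ℕ} (M : Matrix (Fin n) (Fin n) ℝ) (v : Fin n → ℝ) {α : ℝ} (hα : α ≠ 0) :
    Rp M (α • v) = Rp M v := by
  have h1 : (α • v) ⬝ᵥ M.mulVec (α • v) = (α * α) * (v ⬝ᵥ M.mulVec v) := by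
    rw [mulVec_smul, smul_dotProduct, dotProduct_smul]
    simp [smul_smul, mul_assoc]
  have h2 : vecMulVec (α • v) (α • v) = (α * α) • vecMulVec v v := by
    ext i j
    simp [vecMulVec_apply, smul_eq_mul]
    ring
  unfold Rp
  rw [h1, h2, mul_inv, smul_smul]
  congr 1
  rw [mul_right_comm, inv_mul_cancel₀ (mul_ne_zero hα hα), one_mul]

lemma bentGeom_smul {n : ℕ} (M : Matrix (Fin n) (Fin n) ℝ) (v f h₂ : Fin n → ℝ) (c : ℝ) :
    bentGeom M v (c • f) (c • h₂) = c • bentGeom M v f h₂ := by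
  unfold bentGeom
  rw [mulVec_smul, show M.mulVec (c • h₂) - c • f = c • (M.mulVec h₂ - f) by
    rw [mulVec_smul, smul_sub], mulVec_smul, smul_add]

/-- if `M(x,v)` is symmetric positive definite and homogeneous of degree 0
in velocity, and `f`, `h₂` are positively homogeneous of degree 2 in velocity, then the bent
geometry term `h̃₂(x,v) = M⁻¹ f + R_p (M h₂ − f)` is positively homogeneous of degree 2
in velocity. -/
theorem bent_geometry_homogeneous_of_degree_two {n : ℕ}
    (M : (Fin n → ℝ) → (Fin n → ℝ) → Matrix (Fin n) (Fin n) ℝ)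
    (f h₂ : (Fin n → ℝ) → (Fin n → ℝ) → (Fin n → ℝ))
    (hpd : ∀ x v : Fin n → ℝ, v ≠ 0 → (M x v).PosDef)
    (hMhom : ∀ (x v : Fin n → ℝ), v ≠ 0 → ∀ α : ℝ, 0 < α → M x (α • v) = M x v)
    (hfhom : ∀ (x v : Fin n → ℝ), v ≠ 0 → ∀ α : ℝ, 0 < α → f x (α • v) = α ^ 2 • f x v)
    (hhhom : ∀ (x v : Fin n → ℝ), v ≠ 0 → ∀ α : ℝ, 0 < α → h₂ x (α • v) = α ^ 2 • h₂ x v) :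
    ∀ (x v : Fin n → ℝ), v ≠ 0 → ∀ α : ℝ, 0 < α →
      bentGeom (M x (α • v)) (α • v) (f x (α • v)) (h₂ x (α • v))
        = α ^ 2 • bentGeom (M x v) v (f x v) (h₂ x v) := by
  intro x v hv α hα
  rw [hMhom x v hv α hα, hfhom x v hv α hα, hhhom x v hv α hα, bentGeom_smul]
  unfold bentGeom
  rw [Rp_smul _ _ (ne_of_gt hα)]

end
end
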